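/- Let X be a chain. For every orientation-preserving partial transformation α of X there exists an injective orientation-preserving partial transformation β of X such that αβα = α. In particular, the monoid POP(X) of all orientation-preserving partial transformations of X is regular. -/

import Mathlib

variable {X : Type*}

/-- The partial transformation `f` is order-preserving on the subset `A` of its domain. -/
def IsOrdOn [LinearOrder X] (f : X →. X) (A : Set X) : Prop :=
  ∀ ⦃x y u v : X⦄, x ∈ A → y ∈ A → x ≤ y → u ∈ f x → v ∈ f y → u ≤ v

/-- `Y` is an ideal of the partial transformation `f`: a nonempty subset of the domain such
that `f` is order-preserving on `Y` and on `Dom f \ Y`, and every element of `Y` is below every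
element of `Dom f \ Y` while its image is above. -/
def IsIdeal [LinearOrder X] (f : X →. X) (Y : Set X) : Prop :=
  Y.Nonempty ∧ Y ⊆ f.Dom ∧ IsOrdOn f Y ∧ IsOrdOn f (f.Dom \ Y) ∧
    ∀ ⦃a b u v : X⦄, a ∈ Y → b ∈ f.Dom \ Y → u ∈ f a → v ∈ f b → a ≤ b ∧ v ≤ u

/-- `f` is an orientation-preserving partial transformation: it is the empty transformation
or it admits an ideal. -/
def IsOP [LinearOrder X] (f : X →. X) : Prop :=
  f.Dom = ∅ ∨ ∃ Y : Set X, IsIdeal f Y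


/-!
Take for `β` a section of `α`: it sends each value `v` of `α` to one of its preimages, chosen
in the ideal `Y` of `α` whenever possible. Then `αβα = α`, and `β` is injective because `α`
is a function. A section of a map that is order-preserving on a set is order-preserving on the
values it sends into that set. Because preimages in `Y` are preferred, the values of `α` having
no preimage in `Y` are exactly those sent into `Dom α \ Y`, and they form an ideal of `β`; when
there are none, `β` is order-preserving on its whole domain.
-/

namespace PFun

variable {α β : Type*}

open Classical in
noncomputable def sectionPreferring (f : α →. β) (s : Set α) : β →. α :=
  fun b => ⟨b ∈ f.ran, fun h =>
    if hs : b ∈ f.image s then ((f.mem_image b s).1 hs).choose else h.choose⟩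

variable {f : α →. β} {s : Set α} {a : α} {b : β}

theorem mem_of_mem_sectionPreferring (h : a ∈ f.sectionPreferring s b) : b ∈ f a := by
  obtain ⟨hb, rfl⟩ := Part.mem_mk_iff.mp h
  split_ifs with hs
  · exact ((f.mem_image b s).1 hs).choose_spec.2
  · exact hb.choose_spec

theorem mem_of_mem_sectionPreferring_of_mem_image (h : a ∈ f.sectionPreferring s b)
    (hb : b ∈ f.image s) : a ∈ s := by
  obtain ⟨_, rfl⟩ := Part.mem_mk_iff.mp h
  rw [dif_pos hb]
  exact ((f.mem_image b s).1 hb).choose_spec.1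

theorem mem_dom_diff_of_mem_sectionPreferring (h : a ∈ f.sectionPreferring s b)
    (hb : b ∈ f.ran \ f.image s) : a ∈ f.Dom \ s :=
  ⟨Part.dom_iff_mem.2 ⟨b, mem_of_mem_sectionPreferring h⟩,
    fun ha => hb.2 ⟨a, ha, mem_of_mem_sectionPreferring h⟩⟩

theorem sectionPreferring_injective ⦃b b' : β⦄ ⦃a : α⦄ (h : a ∈ f.sectionPreferring s b)
    (h' : a ∈ f.sectionPreferring s b') : b = b' :=
  Part.mem_unique (mem_of_mem_sectionPreferring h) (mem_of_mem_sectionPreferring h')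

theorem comp_sectionPreferring_comp (f : α →. β) (s : Set α) :
    f.comp ((f.sectionPreferring s).comp f) = f := by
  refine PFun.ext fun a b => ⟨fun h => ?_, fun hb => ?_⟩
  · obtain ⟨a', ha', hb⟩ := Part.mem_bind_iff.mp h
    obtain ⟨b', hb', ha'⟩ := Part.mem_bind_iff.mp ha'
    rwa [Part.mem_unique hb (mem_of_mem_sectionPreferring ha')]
  · have hdom : (f.sectionPreferring s b).Dom := ⟨a, hb⟩
    have ha' := Part.get_mem hdom
    exact Part.mem_bind_iff.mpr ⟨_, Part.mem_bind_iff.mpr ⟨b, hb, ha'⟩,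
      mem_of_mem_sectionPreferring ha'⟩

end PFun

open PFun

section

variable [LinearOrder X]

theorem IsOrdOn.of_mem_inverse {f g : X →. X} {A B : Set X} (hf : IsOrdOn f A)
    (hg : ∀ ⦃v u⦄, v ∈ B → u ∈ g v → u ∈ A ∧ v ∈ f u) : IsOrdOn g B := by
  intro v w p q hv hw hvw hp hq
  obtain ⟨hpA, hvp⟩ := hg hv hp
  obtain ⟨hqA, hwq⟩ := hg hw hq
  by_contra! hqp
  obtain rfl : v = w := le_antisymm hvw (hf hqA hpA hqp.le hwq hvp)
  exact hqp.ne (Part.mem_unique hq hp)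

theorem isIdeal_dom_of_isOrdOn {f : X →. X} (hne : f.Dom.Nonempty) (hf : IsOrdOn f f.Dom) :
    IsIdeal f f.Dom :=
  ⟨hne, subset_rfl, hf, fun _ _ _ _ hx => absurd hx.1 hx.2,
    fun _ _ _ _ _ hb => absurd hb.1 hb.2⟩

variable {f : X →. X} {Y : Set X}

theorem IsIdeal.isIdeal_sectionPreferring (hY : IsIdeal f Y)
    (hZ : (f.ran \ f.image Y).Nonempty) :
    IsIdeal (f.sectionPreferring Y) (f.ran \ f.image Y) := by
  obtain ⟨-, -, hordY, hordC, hcross⟩ := hY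
  have mem_image_of_not_mem : ∀ ⦃v⦄, v ∈ (f.sectionPreferring Y).Dom \ (f.ran \ f.image Y) →
      v ∈ f.image Y := fun v hv => by_contra fun h => hv.2 ⟨hv.1, h⟩
  refine ⟨hZ, Set.sdiff_subset, ?_, ?_, ?_⟩
  · exact hordC.of_mem_inverse fun v u hv hu =>
      ⟨mem_dom_diff_of_mem_sectionPreferring hu hv, mem_of_mem_sectionPreferring hu⟩
  · exact hordY.of_mem_inverse fun v u hv hu =>
      ⟨mem_of_mem_sectionPreferring_of_mem_image hu (mem_image_of_not_mem hv),
        mem_of_mem_sectionPreferring hu⟩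
  · intro a b u v ha hb hu hv
    exact (hcross (mem_of_mem_sectionPreferring_of_mem_image hv (mem_image_of_not_mem hb))
      (mem_dom_diff_of_mem_sectionPreferring hu ha) (mem_of_mem_sectionPreferring hv)
      (mem_of_mem_sectionPreferring hu)).symm

theorem IsIdeal.isIdeal_dom_sectionPreferring (hY : IsIdeal f Y) (hZ : f.ran ⊆ f.image Y) :
    IsIdeal (f.sectionPreferring Y) (f.sectionPreferring Y).Dom := by
  obtain ⟨⟨y, hy⟩, hYdom, hordY, -⟩ := hY
  refine isIdeal_dom_of_isOrdOn ⟨(f y).get (hYdom hy), y, Part.get_mem _⟩ ?_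
  exact hordY.of_mem_inverse fun v u hv hu =>
    ⟨mem_of_mem_sectionPreferring_of_mem_image hu (hZ hv), mem_of_mem_sectionPreferring hu⟩

theorem IsIdeal.isOP_sectionPreferring (hY : IsIdeal f Y) : IsOP (f.sectionPreferring Y) := by
  by_cases hZ : (f.ran \ f.image Y).Nonempty
  · exact .inr ⟨_, hY.isIdeal_sectionPreferring hZ⟩
  · rw [Set.not_nonempty_iff_eq_empty, Set.sdiff_eq_empty] at hZ
    exact .inr ⟨_, hY.isIdeal_dom_sectionPreferring hZ⟩

end

theorem stmt7 (X : Type*) [LinearOrder X] (α : X →. X) (hOP : IsOP α) :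
    ∃ β : X →. X, IsOP β ∧ (∀ ⦃x y u : X⦄, u ∈ β x → u ∈ β y → x = y) ∧
      α.comp (β.comp α) = α := by
  obtain ⟨Y, hY⟩ : ∃ Y, α.Dom = ∅ ∨ IsIdeal α Y :=
    hOP.elim (fun h => ⟨∅, .inl h⟩) fun ⟨Y, hY⟩ => ⟨Y, .inr hY⟩
  refine ⟨α.sectionPreferring Y, ?_, sectionPreferring_injective,
    comp_sectionPreferring_comp α Y⟩
  rcases hY with hempty | hY
  · refine .inl (Set.eq_empty_of_forall_notMem fun v ⟨x, hx⟩ => ?_)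
    exact (hempty ▸ Part.dom_iff_mem.2 ⟨v, hx⟩ : x ∈ (∅ : Set X))
  · exact hY.isOP_sectionPreferring
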